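/- arXiv:1503.04884 — 8 statements merged into one kernel-verified Lean document; each statement's English description precedes it below -/
import Mathlib

section
/- Perturbed semimeasure lemma: let g, q : 2^{<ℕ} → [0,∞) with ∑_{τ∈2^{<ℕ}} q(τ) < ∞, and suppose that g(τ⌢0) + g(τ⌢1) ≤ g(τ) + q(τ) for all finite binary strings τ. Define m(τ) = g(τ) + ∑_{ρ ⪰ τ} q(ρ), the sum ranging over all extensions ρ of τ (including τ itself). Then m(τ⌢0) + m(τ⌢1) ≤ m(τ) for all τ, i.e., m is a continuous semimeasure. -/
/-! The extensions of `τ` are `τ` itself together with the extensions of `τ ++ [false]` and of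
`τ ++ [true]`, and these three sets are disjoint. Hence the tail sum of `q` at `τ` is `q τ` plus the
two tail sums at the children, and the extra `q τ` is exactly the slack allowed in the inequality
for `g`. -/

namespace List

variable {α : Type*}

theorem prefix_iff_eq_or_concat_prefix {τ ρ : List α} :
    τ <+: ρ ↔ ρ = τ ∨ ∃ a, τ ++ [a] <+: ρ := by
  constructor
  · rintro ⟨_ | ⟨a, s⟩, rfl⟩
    · simp
    · exact Or.inr ⟨a, s, by simp⟩
  · rintro (rfl | ⟨a, h⟩)
    · exact prefix_refl _
    · exact (prefix_append τ [a]).trans h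

theorem eq_of_concat_prefix_of_concat_prefix {τ ρ : List α} {a b : α}
    (ha : τ ++ [a] <+: ρ) (hb : τ ++ [b] <+: ρ) : a = b := by
  simpa using (prefix_of_prefix_length_le ha hb (by simp)).eq_of_length (by simp)

end List

open List

theorem setOf_prefix_eq_singleton_union_setOf_concat_prefix (τ : List Bool) :
    {ρ | τ <+: ρ} = {τ} ∪ ({ρ | τ ++ [false] <+: ρ} ∪ {ρ | τ ++ [true] <+: ρ}) := by
  ext ρ
  rw [Set.mem_ofPred_eq, prefix_iff_eq_or_concat_prefix, Bool.exists_bool]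
  rfl

theorem tsum_prefix_eq_add_tsum_concat_prefix {E : Type*} [AddCommGroup E] [UniformSpace E]
    [IsUniformAddGroup E] [CompleteSpace E] [T2Space E] {f : List Bool → E} (hf : Summable f)
    (τ : List Bool) :
    ∑' ρ : {ρ // τ <+: ρ}, f ρ =
      f τ + (∑' ρ : {ρ // τ ++ [false] <+: ρ}, f ρ + ∑' ρ : {ρ // τ ++ [true] <+: ρ}, f ρ) := by
  have hτ : τ ∉ {ρ | τ ++ [false] <+: ρ} ∪ {ρ | τ ++ [true] <+: ρ} := by
    rintro (h | h) <;> simpa using h.length_le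
  have hdisj : Disjoint {ρ | τ ++ [false] <+: ρ} {ρ | τ ++ [true] <+: ρ} :=
    Set.disjoint_left.2 fun _ h₀ h₁ =>
      Bool.false_ne_true (eq_of_concat_prefix_of_concat_prefix h₀ h₁)
  change ∑' ρ : ({ρ | τ <+: ρ} : Set _), f ρ = _
  rw [setOf_prefix_eq_singleton_union_setOf_concat_prefix,
    (hf.subtype _).tsum_union_disjoint (Set.disjoint_singleton_left.2 hτ) (hf.subtype _),
    (hf.subtype _).tsum_union_disjoint hdisj (hf.subtype _), tsum_singleton]
  rfl

theorem stmt_3_general (g q : List Bool → ℝ)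
    (hsum : Summable q)
    (h : ∀ τ, g (τ ++ [false]) + g (τ ++ [true]) ≤ g τ + q τ) :
    ∀ τ : List Bool,
      (g (τ ++ [false]) + ∑' ρ : {ρ : List Bool // (τ ++ [false]) <+: ρ}, q ρ) +
        (g (τ ++ [true]) + ∑' ρ : {ρ : List Bool // (τ ++ [true]) <+: ρ}, q ρ) ≤
      g τ + ∑' ρ : {ρ : List Bool // τ <+: ρ}, q ρ := by
  intro τ
  rw [tsum_prefix_eq_add_tsum_concat_prefix hsum τ]
  linarith [h τ]

/-- Perturbed semimeasure lemma: adding the tail-sums of `q` to `g` yields a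
continuous semimeasure `m(τ) = g(τ) + ∑_{ρ ⪰ τ} q(ρ)`. -/
theorem stmt_3 (g q : List Bool → ℝ) (hg : ∀ τ, 0 ≤ g τ) (hq : ∀ τ, 0 ≤ q τ)
    (hsum : Summable q)
    (h : ∀ τ, g (τ ++ [false]) + g (τ ++ [true]) ≤ g τ + q τ) :
    ∀ τ : List Bool,
      (g (τ ++ [false]) + ∑' ρ : {ρ : List Bool // (τ ++ [false]) <+: ρ}, q ρ) +
        (g (τ ++ [true]) + ∑' ρ : {ρ : List Bool // (τ ++ [true]) <+: ρ}, q ρ) ≤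
      g τ + ∑' ρ : {ρ : List Bool // τ <+: ρ}, q ρ :=
  stmt_3_general g q hsum h
end

section
/- Pull-back of open sets through a bounded monotone family: let c > 0 and let A : 2^{<ℕ} → (measurable subsets of 2^ℕ) satisfy A_τ ⊆ A_σ whenever σ is an initial segment of τ, and λ(A_τ) ≤ c·2^{-|τ|} for every τ. Then for every open set V ⊆ 2^ℕ, λ(⋃{A_τ : [τ] ⊆ V}) ≤ c·λ(V). -/
/-!
Only the prefix-minimal strings `σ` with `[σ] ⊆ V` matter: by monotonicity every `A τ` with
`[τ] ⊆ V` lies in `A σ` for such a `σ ≼ τ`. These minimal strings form an antichain, so their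
cylinders are disjoint subsets of `V`, and summing `λ(A σ) ≤ c 2^{-|σ|} = c λ[σ]` over them
gives at most `c λ(V)`.
-/

open MeasureTheory

/-- The cylinder of infinite binary sequences extending the finite string `σ`. -/
def cyl (σ : List Bool) : Set (ℕ → Bool) :=
  {X | ∀ i, (h : i < σ.length) → X i = σ.get ⟨i, h⟩}

/-- `μ` is the fair-coin measure: each cylinder `[σ]` has measure `2^{-|σ|}`. -/
def IsFairCoin (μ : Measure (ℕ → Bool)) : Prop :=
  ∀ σ : List Bool, μ (cyl σ) = (1 / 2) ^ σ.length

lemma measurableSet_cyl (σ : List Bool) : MeasurableSet (cyl σ) := by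
  have : cyl σ = ⋂ i : Fin σ.length, (fun X : ℕ → Bool => X i) ⁻¹' {σ.get i} := by
    ext X; simp [cyl, Fin.forall_iff]
  rw [this]
  exact MeasurableSet.iInter fun i => measurable_pi_apply _ (measurableSet_singleton _)

lemma prefix_of_mem_cyl_of_length_le {σ τ : List Bool} {X : ℕ → Bool} (hσ : X ∈ cyl σ)
    (hτ : X ∈ cyl τ) (hlen : σ.length ≤ τ.length) : σ <+: τ := by
  rw [List.prefix_iff_eq_take]
  refine List.ext_getElem (by simp [hlen]) fun i h₁ _ => ?_
  simpa using (hσ i h₁).symm.trans (hτ i (h₁.trans_le hlen))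

section MinimalPrefixes

variable {α : Type*}

def minimalPrefixes (S : Set (List α)) : Set (List α) :=
  {σ | σ ∈ S ∧ ∀ ρ, ρ <+: σ → ρ ∈ S → ρ = σ}

lemma minimalPrefixes_subset (S : Set (List α)) : minimalPrefixes S ⊆ S :=
  fun _ hσ => hσ.1

lemma exists_mem_minimalPrefixes_prefix {S : Set (List α)} {τ : List α} (hτ : τ ∈ S) :
    ∃ σ ∈ minimalPrefixes S, σ <+: τ := by
  classical
  have hex : ∃ n, τ.take n ∈ S := ⟨τ.length, by simpa using hτ⟩
  refine ⟨τ.take (Nat.find hex), ⟨Nat.find_spec hex, fun ρ hρ hρS => ?_⟩, List.take_prefix _ _⟩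
  have hρ_eq : ρ = τ.take ρ.length :=
    List.prefix_iff_eq_take.mp (hρ.trans (List.take_prefix _ _))
  have hfind_le : Nat.find hex ≤ ρ.length := Nat.find_le (hρ_eq ▸ hρS)
  refine hρ.eq_of_length (le_antisymm hρ.length_le ?_)
  exact (List.length_take_le _ _).trans hfind_le

lemma biUnion_subset_biUnion_minimalPrefixes {β : Type*} {A : List α → Set β}
    (hA : ∀ σ τ : List α, σ <+: τ → A τ ⊆ A σ) (S : Set (List α)) :
    ⋃ τ ∈ S, A τ ⊆ ⋃ σ ∈ minimalPrefixes S, A σ :=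
  Set.iUnion₂_subset fun τ hτ => by
    obtain ⟨σ, hσ, hστ⟩ := exists_mem_minimalPrefixes_prefix hτ
    exact (hA σ τ hστ).trans (Set.subset_biUnion_of_mem (u := A) hσ)

end MinimalPrefixes

lemma pairwise_disjoint_cyl_minimalPrefixes (S : Set (List Bool)) :
    (minimalPrefixes S).Pairwise (Function.onFun Disjoint cyl) := by
  intro σ hσ τ hτ hne
  refine Set.disjoint_left.mpr fun X hXσ hXτ => hne ?_
  rcases le_total σ.length τ.length with h | h
  · exact hτ.2 σ (prefix_of_mem_cyl_of_length_le hXσ hXτ h) hσ.1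
  · exact (hσ.2 τ (prefix_of_mem_cyl_of_length_le hXτ hXσ h) hτ.1).symm

theorem stmt_6_general (μ : Measure (ℕ → Bool)) (hμ : IsFairCoin μ)
    (c : ℝ) (A : List Bool → Set (ℕ → Bool))
    (hmono : ∀ σ τ : List Bool, σ <+: τ → A τ ⊆ A σ)
    (hbound : ∀ τ : List Bool, μ (A τ) ≤ ENNReal.ofReal c * (1 / 2) ^ τ.length)
    (V : Set (ℕ → Bool)) :
    μ (⋃ τ ∈ {τ : List Bool | cyl τ ⊆ V}, A τ) ≤ ENNReal.ofReal c * μ V := by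
  set M := minimalPrefixes {τ : List Bool | cyl τ ⊆ V}
  have hM : M.Countable := Set.to_countable M
  calc μ (⋃ τ ∈ {τ : List Bool | cyl τ ⊆ V}, A τ)
      ≤ μ (⋃ σ ∈ M, A σ) := measure_mono (biUnion_subset_biUnion_minimalPrefixes hmono _)
    _ ≤ ∑' σ : M, μ (A σ) := measure_biUnion_le μ hM _
    _ ≤ ∑' σ : M, ENNReal.ofReal c * μ (cyl σ) :=
        ENNReal.tsum_le_tsum fun σ => (hμ σ).symm ▸ hbound σ
    _ = ENNReal.ofReal c * μ (⋃ σ ∈ M, cyl σ) := by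
        rw [ENNReal.tsum_mul_left,
          measure_biUnion hM (pairwise_disjoint_cyl_minimalPrefixes _) fun σ _ =>
            measurableSet_cyl σ]
    _ ≤ ENNReal.ofReal c * μ V := by
        gcongr
        exact Set.iUnion₂_subset fun σ hσ => (minimalPrefixes_subset _ hσ : cyl σ ⊆ V)

/-- Pull-back of open sets through a bounded monotone family. -/
theorem stmt_6 (μ : Measure (ℕ → Bool)) (hμ : IsFairCoin μ)
    (c : ℝ) (hc : 0 < c) (A : List Bool → Set (ℕ → Bool))
    (hmeas : ∀ τ, MeasurableSet (A τ))
    (hmono : ∀ σ τ : List Bool, σ <+: τ → A τ ⊆ A σ)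
    (hbound : ∀ τ : List Bool, μ (A τ) ≤ ENNReal.ofReal c * (1 / 2) ^ τ.length)
    (V : Set (ℕ → Bool)) (hV : IsOpen V) :
    μ (⋃ τ ∈ {τ : List Bool | cyl τ ⊆ V}, A τ) ≤ ENNReal.ofReal c * μ V :=
  stmt_6_general μ hμ c A hmono hbound V
end

section
/- Kučera counting lemma: let A ⊆ 2^ℕ be measurable, let σ be a binary string of length ℓ, let δ > 0, and suppose λ(A ∩ [σ]) ≥ δ·2^{-ℓ}. Then for every m ≥ 1, the number of extensions τ of σ of length ℓ+m with λ(A ∩ [τ]) ≥ (δ/2)·2^{-(ℓ+m)} is at least δ·2^{m-1}. In particular, if δ·2^{m-1} ≥ 2 then there are at least two such extensions τ. -/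
/-!
Split `[σ]` into its `2^m` extensions `τ` of length `ℓ + m`, and call `τ` heavy when
`λ(A ∩ [τ]) ≥ (δ/2)·2^{-(ℓ+m)}`. By subadditivity `λ(A ∩ [σ])` is at most the sum of the
`λ(A ∩ [τ])`. A heavy `τ` contributes at most `λ[τ] = 2^{-(ℓ+m)}` and a light one less than
`(δ/2)·2^{-(ℓ+m)}`, so the light ones together contribute less than `(δ/2)·2^{-ℓ}`. Hence
`δ·2^{-ℓ} ≤ N·2^{-(ℓ+m)} + (δ/2)·2^{-ℓ}`, where `N` is the number of heavy extensions, which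
gives `N ≥ δ·2^{m-1}`.
-/

open MeasureTheory

open Finset ENNReal

theorem Finset.sum_le_card_filter_nsmul_add_card_nsmul {ι M : Type*} [AddCommMonoid M]
    [LinearOrder M] [IsOrderedAddMonoid M] [CanonicallyOrderedAdd M]
    (s : Finset ι) (a : ι → M) {b : M} (c : M) (hb : ∀ i ∈ s, a i ≤ b) :
    ∑ i ∈ s, a i ≤ #{i ∈ s | c ≤ a i} • b + #s • c := by
  rw [← sum_filter_add_sum_filter_not s (c ≤ a ·)]
  gcongr
  · exact sum_le_card_nsmul _ _ _ fun i hi => hb i (mem_filter.1 hi).1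
  · calc ∑ i ∈ s with ¬c ≤ a i, a i ≤ #{i ∈ s | ¬c ≤ a i} • c :=
          sum_le_card_nsmul _ _ _ fun i hi => (not_le.1 (mem_filter.1 hi).2).le
      _ ≤ #s • c := nsmul_le_nsmul_left (zero_le (a := c)) (card_filter_le _ _)

def extensions (σ : List Bool) (m : ℕ) : Finset (List Bool) :=
  univ.image fun v : List.Vector Bool m => σ ++ v.toList

theorem mem_extensions {σ τ : List Bool} {m : ℕ} :
    τ ∈ extensions σ m ↔ σ <+: τ ∧ τ.length = σ.length + m := by
  simp only [extensions, mem_image, mem_univ, true_and]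
  constructor
  · rintro ⟨v, rfl⟩
    simp
  · rintro ⟨⟨t, rfl⟩, ht⟩
    exact ⟨⟨t, by simpa using ht⟩, rfl⟩

theorem card_extensions (σ : List Bool) (m : ℕ) : #(extensions σ m) = 2 ^ m := by
  rw [extensions, card_image_of_injective, card_univ, card_vector, Fintype.card_bool]
  intro v w hvw
  exact List.Vector.toList_injective (List.append_cancel_left hvw)

theorem cyl_subset_biUnion_extensions (σ : List Bool) (m : ℕ) :
    cyl σ ⊆ ⋃ τ ∈ extensions σ m, cyl τ := by
  intro X hX
  let v : List.Vector Bool m := ⟨List.ofFn fun j : Fin m => X (σ.length + j), List.length_ofFn⟩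
  refine Set.mem_biUnion (x := σ ++ v.toList) (mem_image_of_mem _ (mem_univ v)) ?_
  intro i hi
  rcases lt_or_ge i σ.length with h | h
  · simpa [List.getElem_append_left h] using hX i h
  · simp only [v, List.Vector.toList_mk, List.get_eq_getElem, List.getElem_append_right h,
      List.getElem_ofFn]
    congr
    omega

theorem ENNReal.one_half_pow_eq_two_pow_mul (n m : ℕ) :
    (1 / 2 : ℝ≥0∞) ^ n = 2 ^ m * (1 / 2) ^ (n + m) := by
  rw [pow_add, mul_left_comm, ← mul_pow, one_div, ENNReal.mul_inv_cancel two_ne_zero ofNat_ne_top,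
    one_pow, mul_one]

noncomputable def heavyExtensions (μ : Measure (ℕ → Bool)) (A : Set (ℕ → Bool)) (σ : List Bool)
    (m : ℕ) (c : ℝ≥0∞) : Finset (List Bool) :=
  {τ ∈ extensions σ m | c * (1 / 2) ^ (σ.length + m) ≤ μ (A ∩ cyl τ)}

theorem coe_heavyExtensions (μ : Measure (ℕ → Bool)) (A : Set (ℕ → Bool)) (σ : List Bool)
    (m : ℕ) (c : ℝ≥0∞) :
    (heavyExtensions μ A σ m c : Set (List Bool)) =
      {τ | σ <+: τ ∧ τ.length = σ.length + m ∧ c * (1 / 2) ^ (σ.length + m) ≤ μ (A ∩ cyl τ)} := by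
  ext τ
  simp [heavyExtensions, mem_extensions, and_assoc]

theorem measure_inter_cyl_le_card_heavyExtensions {μ : Measure (ℕ → Bool)} (hμ : IsFairCoin μ)
    (A : Set (ℕ → Bool)) (σ : List Bool) (m : ℕ) (c : ℝ≥0∞) :
    μ (A ∩ cyl σ) ≤ (#(heavyExtensions μ A σ m c) + 2 ^ m * c) * (1 / 2) ^ (σ.length + m) := by
  have hcyl : ∀ τ ∈ extensions σ m, μ (A ∩ cyl τ) ≤ (1 / 2) ^ (σ.length + m) := fun τ hτ => by
    rw [← (mem_extensions.1 hτ).2, ← hμ]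
    exact measure_mono Set.inter_subset_right
  calc μ (A ∩ cyl σ) ≤ μ (⋃ τ ∈ extensions σ m, A ∩ cyl τ) := by
        rw [← Set.inter_iUnion₂]
        exact measure_mono (Set.inter_subset_inter_right A (cyl_subset_biUnion_extensions σ m))
    _ ≤ ∑ τ ∈ extensions σ m, μ (A ∩ cyl τ) := measure_biUnion_finset_le _ _
    _ ≤ _ := sum_le_card_filter_nsmul_add_card_nsmul _ _ (c * (1 / 2) ^ (σ.length + m)) hcyl
    _ = _ := by rw [card_extensions, nsmul_eq_mul, nsmul_eq_mul, heavyExtensions]; push_cast; ring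

theorem mul_two_pow_pred_le_of_ofReal_mul_two_pow_le {δ : ℝ} {m N : ℕ} (hm : 1 ≤ m)
    (h : ENNReal.ofReal δ * 2 ^ m ≤ N + 2 ^ m * ENNReal.ofReal (δ / 2)) :
    δ * 2 ^ (m - 1) ≤ N := by
  -- `ofReal` truncates at `0`, so this also holds for `δ < 0`.
  have hδ : ENNReal.ofReal δ = 2 * ENNReal.ofReal (δ / 2) := by
    rw [← ofReal_ofNat 2, ← ofReal_mul zero_le_two, mul_div_cancel₀ δ (two_ne_zero (α := ℝ))]
  have hy : 2 ^ m * ENNReal.ofReal (δ / 2) ≤ N := by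
    refine ENNReal.le_of_add_le_add_right (a := 2 ^ m * ENNReal.ofReal (δ / 2)) (by finiteness) ?_
    calc _ = ENNReal.ofReal δ * 2 ^ m := by rw [hδ]; ring
      _ ≤ _ := h
  obtain ⟨k, rfl⟩ := Nat.exists_eq_add_of_le' hm
  rw [← ofReal_ofNat 2, ← ofReal_pow zero_le_two, ← ofReal_mul (by positivity), ofReal_le_natCast]
    at hy
  convert hy using 1
  simp only [Nat.add_sub_cancel, pow_succ]
  ring

theorem stmt_7_general (μ : Measure (ℕ → Bool)) (hμ : IsFairCoin μ)
    (A : Set (ℕ → Bool))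
    (σ : List Bool) (ℓ : ℕ) (hσ : σ.length = ℓ)
    (δ : ℝ)
    (h : ENNReal.ofReal δ * (1 / 2) ^ ℓ ≤ μ (A ∩ cyl σ)) :
    ∀ m : ℕ, 1 ≤ m →
      δ * 2 ^ (m - 1) ≤
        (({τ : List Bool | σ <+: τ ∧ τ.length = ℓ + m ∧
            ENNReal.ofReal (δ / 2) * (1 / 2) ^ (ℓ + m) ≤ μ (A ∩ cyl τ)}).ncard : ℝ) ∧
      (2 ≤ δ * 2 ^ (m - 1) →
        ∃ τ₁ τ₂ : List Bool, τ₁ ≠ τ₂ ∧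
          (σ <+: τ₁ ∧ τ₁.length = ℓ + m ∧
            ENNReal.ofReal (δ / 2) * (1 / 2) ^ (ℓ + m) ≤ μ (A ∩ cyl τ₁)) ∧
          (σ <+: τ₂ ∧ τ₂.length = ℓ + m ∧
            ENNReal.ofReal (δ / 2) * (1 / 2) ^ (ℓ + m) ≤ μ (A ∩ cyl τ₂))) := by
  intro m hm
  subst hσ
  rw [← coe_heavyExtensions, Set.ncard_coe_finset]
  have hcard : δ * 2 ^ (m - 1) ≤ #(heavyExtensions μ A σ m (ENNReal.ofReal (δ / 2))) := by
    refine mul_two_pow_pred_le_of_ofReal_mul_two_pow_le hm ?_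
    have hmass := h.trans <|
      measure_inter_cyl_le_card_heavyExtensions hμ A σ m (ENNReal.ofReal (δ / 2))
    rw [one_half_pow_eq_two_pow_mul _ m, ← mul_assoc] at hmass
    exact (ENNReal.mul_le_mul_iff_left (by simp) (by finiteness)).1 hmass
  refine ⟨hcard, fun h2 => ?_⟩
  obtain ⟨τ₁, h₁, τ₂, h₂, hne⟩ :=
    one_lt_card.1 (by exact_mod_cast one_lt_two.trans_le (h2.trans hcard))
  rw [← mem_coe, coe_heavyExtensions] at h₁ h₂
  exact ⟨τ₁, τ₂, hne, h₁, h₂⟩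

/-- Kučera counting lemma. -/
theorem stmt_7 (μ : Measure (ℕ → Bool)) (hμ : IsFairCoin μ)
    (A : Set (ℕ → Bool)) (hA : MeasurableSet A)
    (σ : List Bool) (ℓ : ℕ) (hσ : σ.length = ℓ)
    (δ : ℝ) (hδ : 0 < δ)
    (h : ENNReal.ofReal δ * (1 / 2) ^ ℓ ≤ μ (A ∩ cyl σ)) :
    ∀ m : ℕ, 1 ≤ m →
      δ * 2 ^ (m - 1) ≤
        (({τ : List Bool | σ <+: τ ∧ τ.length = ℓ + m ∧
            ENNReal.ofReal (δ / 2) * (1 / 2) ^ (ℓ + m) ≤ μ (A ∩ cyl τ)}).ncard : ℝ) ∧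
      (2 ≤ δ * 2 ^ (m - 1) →
        ∃ τ₁ τ₂ : List Bool, τ₁ ≠ τ₂ ∧
          (σ <+: τ₁ ∧ τ₁.length = ℓ + m ∧
            ENNReal.ofReal (δ / 2) * (1 / 2) ^ (ℓ + m) ≤ μ (A ∩ cyl τ₁)) ∧
          (σ <+: τ₂ ∧ τ₂.length = ℓ + m ∧
            ENNReal.ofReal (δ / 2) * (1 / 2) ^ (ℓ + m) ≤ μ (A ∩ cyl τ₂))) :=
  stmt_7_general μ hμ A σ ℓ hσ δ h
end

section
/- Limit-point test lemma: let W : ℕ → (subsets of 2^ℕ) and let S ⊆ ℕ^ℕ be a set whose closure S̄ in Baire space is compact. Assume that for every g ∈ S̄ the sequence (W_{g(n)})_n is nested, i.e., W_{g(n+1)} ⊆ W_{g(n)} for all n. Then for every Y ∈ ⋂_n ⋃_{f∈S} W_{f(n)} there exists g ∈ S̄ with Y ∈ ⋂_n W_{g(n)}. Consequently, if S̄ is countable and λ(⋂_n W_{g(n)}) = 0 for every g ∈ S̄, then λ(⋂_n ⋃_{f∈S} W_{f(n)}) = 0. -/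
open MeasureTheory

/-!
Given `Y ∈ W (f n n)` with `f n ∈ S` for every `n`, take a cluster point `g ∈ closure S` of
`(f n)`. Every coordinate `g m` is then attained as `f n m` for some `n ≥ m`, and nestedness
along `f n` gives `Y ∈ W (f n n) ⊆ W (f n m) = W (g m)`. Hence `⋂ n, ⋃ f ∈ S, W (f n)` is
covered by the sets `⋂ n, W (g n)` with `g ∈ closure S`, and a countable union of null sets is
null.
-/

open Filter Set

theorem IsCompact.exists_mem_frequently_apply_eq {ι β : Type*} [TopologicalSpace β]
    [DiscreteTopology β] {K : Set (ι → β)} (hK : IsCompact K) {f : ℕ → ι → β}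
    (hf : ∀ n, f n ∈ K) : ∃ g ∈ K, ∀ i, ∃ᶠ n in atTop, f n i = g i := by
  have hmap : map f atTop ≤ 𝓟 K := le_principal_iff.2 (mem_map.2 (Eventually.of_forall hf))
  obtain ⟨g, hgK, hcluster⟩ := hK.exists_clusterPt hmap
  refine ⟨g, hgK, fun i => mapClusterPt_iff_frequently.1 hcluster {h | h i = g i} ?_⟩
  exact ((isOpen_discrete {g i}).preimage (continuous_apply i)).mem_nhds (mem_singleton (g i))

theorem iInter_iUnion_subset_biUnion_closure_iInter {α : Type*} {W : ℕ → Set α}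
    {S : Set (ℕ → ℕ)} (hcpt : IsCompact (closure S))
    (hanti : ∀ f ∈ S, Antitone (W ∘ f)) :
    ⋂ n, ⋃ f ∈ S, W (f n) ⊆ ⋃ g ∈ closure S, ⋂ n, W (g n) := by
  intro Y hY
  simp only [mem_iInter, mem_iUnion] at hY
  choose f hfS hYf using hY
  obtain ⟨g, hg, hfreq⟩ := hcpt.exists_mem_frequently_apply_eq fun n => subset_closure (hfS n)
  refine mem_biUnion hg (mem_iInter.2 fun m => ?_)
  obtain ⟨n, hmn, hfg⟩ := frequently_atTop.1 (hfreq m) m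
  exact hfg ▸ hanti (f n) (hfS n) hmn (hYf n)

theorem stmt_9_general (μ : Measure (ℕ → Bool))
    (W : ℕ → Set (ℕ → Bool)) (S : Set (ℕ → ℕ))
    (hcpt : IsCompact (closure S))
    (hnest : ∀ g ∈ closure S, ∀ n : ℕ, W (g (n + 1)) ⊆ W (g n)) :
    (∀ Y ∈ ⋂ n, ⋃ f ∈ S, W (f n), ∃ g ∈ closure S, Y ∈ ⋂ n, W (g n)) ∧
      ((closure S).Countable → (∀ g ∈ closure S, μ (⋂ n, W (g n)) = 0) →
        μ (⋂ n, ⋃ f ∈ S, W (f n)) = 0) := by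
  have hcover := iInter_iUnion_subset_biUnion_closure_iInter hcpt fun f hf =>
    antitone_nat_of_succ_le (hnest f (subset_closure hf))
  refine ⟨fun Y hY => by simpa only [mem_iUnion, exists_prop] using hcover hY,
    fun hcount hnull => ?_⟩
  exact measure_mono_null hcover ((measure_biUnion_null_iff hcount).2 hnull)

/-- Limit-point test lemma. -/
theorem stmt_9 (μ : Measure (ℕ → Bool)) (hμ : IsFairCoin μ)
    (W : ℕ → Set (ℕ → Bool)) (S : Set (ℕ → ℕ))
    (hcpt : IsCompact (closure S))
    (hnest : ∀ g ∈ closure S, ∀ n : ℕ, W (g (n + 1)) ⊆ W (g n)) :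
    (∀ Y ∈ ⋂ n, ⋃ f ∈ S, W (f n), ∃ g ∈ closure S, Y ∈ ⋂ n, W (g n)) ∧
      ((closure S).Countable → (∀ g ∈ closure S, μ (⋂ n, W (g n)) = 0) →
        μ (⋂ n, ⋃ f ∈ S, W (f n)) = 0) :=
  stmt_9_general μ W S hcpt hnest
end

section
/- Splitting a perfect tree by a dense open set: let T ⊆ 2^{<ℕ} be a perfect tree (T is nonempty, closed under initial segments, and every node of T has two incomparable extensions in T). Then there exists a set D ⊆ T which is upward closed in T (if σ ∈ D, σ ⪯ τ, and τ ∈ T then τ ∈ D) and dense in T (every node of T has an extension in D), such that T ∖ D is again a perfect tree. -/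
/-- A tree of finite binary strings is perfect if it is nonempty, downward closed
under the prefix order, and every node has two incomparable extensions in the tree. -/
def IsPerfectTree (T : Set (List Bool)) : Prop :=
  T.Nonempty ∧ (∀ σ τ : List Bool, σ <+: τ → τ ∈ T → σ ∈ T) ∧
    ∀ σ ∈ T, ∃ τ₁ ∈ T, ∃ τ₂ ∈ T, σ <+: τ₁ ∧ σ <+: τ₂ ∧ ¬ τ₁ <+: τ₂ ∧ ¬ τ₂ <+: τ₁

/-! Choosing a splitting node above every node of `T` embeds the full binary tree into `T` by
a map `e` with `e u ++ [b]` below `e (b :: u)`. Between `e u ++ [b]` and `e (b :: u)` we insist on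
passing through a further splitting node `ρ` and leaving it by `false`, so that `ρ ++ [true]`
lies in `T` but is no longer a prefix of any `e w`. The downward closure `P` of the image of `e`
is therefore a perfect subtree of `T` in which every node has an extension in `T \ P`, and
`D = T \ P` works. -/

namespace List

variable {α : Type*}

lemma eq_of_append_singleton_prefix {l m : List α} {a b : α} (ha : l ++ [a] <+: m)
    (hb : l ++ [b] <+: m) : a = b := by
  rcases prefix_or_prefix_of_prefix ha hb with h | h
  · simpa using h
  · simpa [eq_comm] using h

lemma exists_cons_suffix_of_suffix_of_ne {u w : List α} (h : u <:+ w) (hne : u ≠ w) :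
    ∃ a, a :: u <:+ w := by
  obtain ⟨t, rfl⟩ := h
  obtain ⟨t', a, rfl⟩ := t.eq_nil_or_concat.resolve_left (by rintro rfl; exact hne rfl)
  exact ⟨a, t', by simp⟩

lemma exists_append_singleton_prefixes_of_not_prefix :
    ∀ {l₁ l₂ : List α}, ¬ l₁ <+: l₂ → ¬ l₂ <+: l₁ →
      ∃ ρ a b, a ≠ b ∧ ρ ++ [a] <+: l₁ ∧ ρ ++ [b] <+: l₂
  | [], _, h, _ => absurd nil_prefix h
  | _ :: _, [], _, h => absurd nil_prefix h
  | a :: l₁, b :: l₂, h₁₂, h₂₁ => by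
    by_cases hab : a = b
    · subst hab
      obtain ⟨ρ, c, d, hcd, hc, hd⟩ := exists_append_singleton_prefixes_of_not_prefix
        (by simpa using h₁₂) (by simpa using h₂₁)
      exact ⟨a :: ρ, c, d, hcd, by simpa using hc, by simpa using hd⟩
    · exact ⟨[], a, b, hab, by simp, by simp⟩

lemma exists_branch_of_prefix_of_not_prefix {σ l₁ l₂ : List α} (h₁ : σ <+: l₁) (h₂ : σ <+: l₂)
    (h₁₂ : ¬ l₁ <+: l₂) (h₂₁ : ¬ l₂ <+: l₁) :
    ∃ ρ a b, σ <+: ρ ∧ a ≠ b ∧ ρ ++ [a] <+: l₁ ∧ ρ ++ [b] <+: l₂ := by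
  obtain ⟨ρ, a, b, hab, ha, hb⟩ := exists_append_singleton_prefixes_of_not_prefix h₁₂ h₂₁
  have hρa : ¬ ρ ++ [a] <+: l₂ := fun h => hab (eq_of_append_singleton_prefix h hb)
  rcases prefix_or_prefix_of_prefix h₁ ha with hσ | hσ
  · rcases prefix_concat_iff.mp hσ with rfl | hσρ
    · exact absurd h₂ hρa
    · exact ⟨ρ, a, b, hσρ, hab, ha, hb⟩
  · exact absurd (hσ.trans h₂) hρa

end List

namespace IsPerfectTree

variable {T : Set (List Bool)}

lemma nil_mem (hT : IsPerfectTree T) : [] ∈ T :=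
  hT.2.1 _ _ List.nil_prefix hT.1.some_mem

lemma exists_split (hT : IsPerfectTree T) {σ : List Bool} (hσ : σ ∈ T) :
    ∃ ρ, σ <+: ρ ∧ ρ ++ [false] ∈ T ∧ ρ ++ [true] ∈ T := by
  obtain ⟨-, hdown, hsplit⟩ := hT
  obtain ⟨τ₁, hτ₁, τ₂, hτ₂, h₁, h₂, h₁₂, h₂₁⟩ := hsplit σ hσ
  obtain ⟨ρ, a, b, hσρ, hab, ha, hb⟩ := List.exists_branch_of_prefix_of_not_prefix h₁ h₂ h₁₂ h₂₁
  have haT := hdown _ _ ha hτ₁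
  have hbT := hdown _ _ hb hτ₂
  refine ⟨ρ, hσρ, ?_⟩
  cases a <;> cases b <;> first | exact (hab rfl).elim | exact ⟨haT, hbT⟩ | exact ⟨hbT, haT⟩

end IsPerfectTree

/-- Strings are indexed in reverse: `a :: u` is a child of `u`. -/
def IsTreeEmbedding {α : Type*} (e : List α → List α) : Prop :=
  ∀ u a, e u ++ [a] <+: e (a :: u)

namespace IsTreeEmbedding

variable {α : Type*} {e : List α → List α}

lemma prefix_of_suffix (he : IsTreeEmbedding e) {u w : List α} (h : u <:+ w) :
    e u <+: e w := by
  induction w with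
  | nil => rw [List.suffix_nil.mp h]
  | cons a w ih =>
    rcases List.suffix_cons_iff.mp h with rfl | h
    · exact List.prefix_rfl
    · exact ((ih h).trans (List.prefix_append _ _)).trans (he w a)

lemma cons_suffix_of_suffix (he : IsTreeEmbedding e) {u w : List α} {a : α} (h : u <:+ w)
    (ha : e u ++ [a] <+: e w) : a :: u <:+ w := by
  obtain ⟨b, hb⟩ := List.exists_cons_suffix_of_suffix_of_ne h (by
    rintro rfl
    simpa using ha.length_le)
  obtain rfl := List.eq_of_append_singleton_prefix ha ((he u b).trans (he.prefix_of_suffix hb))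
  exact hb

lemma suffix_of_prefix (he : IsTreeEmbedding e) {u w : List α} (h : e u <+: e w) : u <:+ w := by
  induction u with
  | nil => exact List.nil_suffix
  | cons a u ih =>
    have ha := (he u a).trans h
    exact he.cons_suffix_of_suffix (ih ((List.prefix_append _ _).trans ha)) ha

lemma cons_suffix_of_append_prefix (he : IsTreeEmbedding e) {u w : List α} {a : α}
    (h : e u ++ [a] <+: e w) : a :: u <:+ w :=
  he.cons_suffix_of_suffix (he.suffix_of_prefix ((List.prefix_append _ _).trans h)) h

lemma isPerfectTree_prefixes {e : List Bool → List Bool} (he : IsTreeEmbedding e) :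
    IsPerfectTree {σ | ∃ u, σ <+: e u} := by
  refine ⟨⟨e [], [], List.prefix_rfl⟩, fun σ τ h ⟨u, hu⟩ => ⟨u, h.trans hu⟩, ?_⟩
  rintro σ ⟨u, hu⟩
  have hσ : ∀ a, σ <+: e (a :: u) := fun a => (hu.trans (List.prefix_append _ _)).trans (he u a)
  have hinc : ∀ a b, e (a :: u) <+: e (b :: u) → a = b := fun a b h =>
    List.eq_of_append_singleton_prefix ((he u a).trans h) (he u b)
  exact ⟨e (false :: u), ⟨_, List.prefix_rfl⟩, e (true :: u), ⟨_, List.prefix_rfl⟩,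
    hσ false, hσ true, fun h => by simpa using hinc _ _ h, fun h => by simpa using hinc _ _ h⟩

end IsTreeEmbedding

lemma not_append_prefix_of_ne {α : Type*} {e : List α → List α} {g : List α → α → List α}
    {x y : α} (hxy : x ≠ y) (hg₁ : ∀ u a, e u ++ [a] <+: g u a)
    (hg₂ : ∀ u a, g u a ++ [x] <+: e (a :: u)) {u w : List α} {a : α} :
    ¬ g u a ++ [y] <+: e w := by
  intro hy
  have he : IsTreeEmbedding e := fun u a =>
    (hg₁ u a).trans ((List.prefix_append _ _).trans (hg₂ u a))
  have hsuf := he.cons_suffix_of_append_prefix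
    ((hg₁ u a).trans ((List.prefix_append _ _).trans hy))
  exact hxy (List.eq_of_append_singleton_prefix ((hg₂ u a).trans (he.prefix_of_suffix hsuf)) hy)

def skeleton (s : List Bool → List Bool) : List Bool → List Bool
  | [] => s []
  | b :: u => s (s (skeleton s u ++ [b]) ++ [false])

lemma skeleton_append_mem {T : Set (List Bool)} {s : List Bool → List Bool}
    (hs : ∀ σ ∈ T, σ <+: s σ ∧ s σ ++ [false] ∈ T ∧ s σ ++ [true] ∈ T) (hnil : [] ∈ T) :
    ∀ u b, skeleton s u ++ [b] ∈ T
  | [], b => by cases b <;> simp [skeleton, hs [] hnil]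
  | c :: u, b => by
    have h := hs _ (hs _ (skeleton_append_mem hs hnil u c)).2.1
    cases b <;> simp [skeleton, h]

lemma IsPerfectTree.exists_perfect_subtree_nowhere_dense {T : Set (List Bool)}
    (hT : IsPerfectTree T) :
    ∃ P ⊆ T, IsPerfectTree P ∧ ∀ σ ∈ P, ∃ τ ∈ T, σ <+: τ ∧ τ ∉ P := by
  choose! s hs using fun σ (hσ : σ ∈ T) => hT.exists_split hσ
  have hmem := skeleton_append_mem hs hT.nil_mem
  set e := skeleton s
  have hg₁ : ∀ u b, e u ++ [b] <+: s (e u ++ [b]) := fun u b => (hs _ (hmem u b)).1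
  have hg₂ : ∀ u b, s (e u ++ [b]) ++ [false] <+: e (b :: u) :=
    fun u b => (hs _ (hs _ (hmem u b)).2.1).1
  have he : IsTreeEmbedding e := fun u b =>
    (hg₁ u b).trans ((List.prefix_append _ _).trans (hg₂ u b))
  refine ⟨{σ | ∃ u, σ <+: e u}, ?_, he.isPerfectTree_prefixes, ?_⟩
  · rintro σ ⟨u, hu⟩
    exact hT.2.1 _ _ (hu.trans (List.prefix_append _ _)) (hmem u false)
  · rintro σ ⟨u, hu⟩
    have hσ : σ <+: s (e u ++ [false]) := (hu.trans (List.prefix_append _ _)).trans (hg₁ u false)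
    exact ⟨s (e u ++ [false]) ++ [true], (hs _ (hmem u false)).2.2,
      hσ.trans (List.prefix_append _ _),
      fun ⟨_, hw⟩ => not_append_prefix_of_ne Bool.false_ne_true hg₁ hg₂ hw⟩

/-- Splitting a perfect tree by a dense open set: there is a dense, upward closed
(in `T`) set `D ⊆ T` such that `T \ D` is again a perfect tree. -/
theorem stmt_10 (T : Set (List Bool)) (hT : IsPerfectTree T) :
    ∃ D ⊆ T, (∀ σ ∈ D, ∀ τ ∈ T, σ <+: τ → τ ∈ D) ∧
      (∀ σ ∈ T, ∃ τ ∈ D, σ <+: τ) ∧ IsPerfectTree (T \ D) := by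
  obtain ⟨P, hPT, hP, hgap⟩ := hT.exists_perfect_subtree_nowhere_dense
  refine ⟨T \ P, Set.sdiff_subset, ?_, ?_, by rwa [Set.sdiff_sdiff_cancel_left hPT]⟩
  · rintro σ ⟨-, hσP⟩ τ hτ hστ
    exact ⟨hτ, fun hτP => hσP (hP.2.1 σ τ hστ hτP)⟩
  · intro σ hσ
    by_cases hσP : σ ∈ P
    · obtain ⟨τ, hτ, hστ, hτP⟩ := hgap σ hσP
      exact ⟨τ, ⟨hτ, hτP⟩, hστ⟩
    · exact ⟨σ, ⟨hσ, hσP⟩, List.prefix_rfl⟩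
end

section
/- Point selection in a conull intersection of F_σ sets: for each e ∈ ℕ let (F^{e,k})_{k∈ℕ} be an increasing (in k) sequence of closed subsets of 2^ℕ such that λ(⋃_k F^{e,k}) = 1. Then there exist x ∈ 2^ℕ and c : ℕ → ℕ such that x ∈ ⋂_e F^{e,c(e)}, and moreover for every e, λ(⋂_{d<e} F^{d,c(d)} ∩ [x↾e]) ≥ 2^{-e} · λ([x↾e]). -/
open MeasureTheory

namespace Stmt13Aux

lemma cyl_nil : cyl [] = Set.univ := by
  ext X; simp [cyl]

lemma measurableSet_cyl (σ : List Bool) : MeasurableSet (cyl σ) := by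
  have : cyl σ = ⋂ i : Fin σ.length, (fun X : ℕ → Bool => X i) ⁻¹' {σ.get i} := by
    ext X
    simp only [cyl, Set.mem_setOf_eq, Set.mem_iInter, Set.mem_preimage, Set.mem_singleton_iff]
    constructor
    · intro h i; exact h i i.2
    · intro h i hi; exact h ⟨i, hi⟩
  rw [this]
  exact MeasurableSet.iInter fun i => measurable_pi_apply (i : ℕ) (measurableSet_singleton _)

lemma mem_cyl_append (σ : List Bool) (X : ℕ → Bool) (hX : X ∈ cyl σ) :
    X ∈ cyl (σ ++ [X σ.length]) := by
  intro i hi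
  simp only [List.get_eq_getElem]
  rcases lt_or_eq_of_le (Nat.lt_succ_iff.mp (by simpa using hi)) with h | h
  · rw [List.getElem_append_left h]
    exact hX i h
  · rw [List.getElem_concat_length h]
    rw [h]

lemma cyl_subset_union (σ : List Bool) :
    cyl σ ⊆ cyl (σ ++ [false]) ∪ cyl (σ ++ [true]) := by
  intro X hX
  have := mem_cyl_append σ X hX
  cases hb : X σ.length
  · left; rwa [hb] at this
  · right; rwa [hb] at this

/-- The finite intersection determined by a list of indices. -/
def A (F : ℕ → ℕ → Set (ℕ → Bool)) (cs : List ℕ) : Set (ℕ → Bool) :=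
  ⋂ d ∈ Finset.range cs.length, F d (cs.getD d 0)

lemma A_nil (F : ℕ → ℕ → Set (ℕ → Bool)) : A F [] = Set.univ := by
  simp [A]

lemma A_append (F : ℕ → ℕ → Set (ℕ → Bool)) (cs : List ℕ) (k : ℕ) :
    A F (cs ++ [k]) = A F cs ∩ F cs.length k := by
  have hlen : (cs ++ [k]).length = cs.length + 1 := by simp
  rw [A, hlen, Finset.range_add_one, Finset.set_biInter_insert]
  rw [Set.inter_comm (F cs.length ((cs ++ [k]).getD cs.length 0))]
  congr 1
  · apply Set.iInter₂_congr
    intro d hd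
    rw [List.getD_append _ _ _ _ (Finset.mem_range.mp hd)]
  · rw [List.getD_eq_getElem _ _ (by simp), List.getElem_concat_length rfl]

lemma measurableSet_A (F : ℕ → ℕ → Set (ℕ → Bool)) (hcl : ∀ e k, IsClosed (F e k))
    (cs : List ℕ) : MeasurableSet (A F cs) :=
  MeasurableSet.biInter (Set.to_countable _) fun d _ => (hcl d _).measurableSet

lemma mu_univ (μ : Measure (ℕ → Bool)) (hμ : IsFairCoin μ) : μ Set.univ = 1 := by
  have := hμ []
  simpa [cyl_nil] using this

/-- Key step: extend the string by one bit and choose the next index. -/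
lemma step (μ : Measure (ℕ → Bool)) (hμ : IsFairCoin μ) (F : ℕ → ℕ → Set (ℕ → Bool))
    (hcl : ∀ e k, IsClosed (F e k)) (hmono : ∀ e, Monotone (F e))
    (hfull : ∀ e, μ (⋃ k, F e k) = 1) (σ : List Bool) (cs : List ℕ)
    (hm : (4⁻¹ : ENNReal) ^ σ.length ≤ μ (A F cs ∩ cyl σ)) :
    ∃ k b, (4⁻¹ : ENNReal) ^ (σ.length + 1) ≤
      μ (A F (cs ++ [k]) ∩ cyl (σ ++ [b])) := by
  classical
  set n := σ.length
  set e := cs.length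
  set S := A F cs ∩ cyl σ with hS
  have hSmeas : MeasurableSet S :=
    (measurableSet_A F hcl cs).inter (measurableSet_cyl σ)
  have hcompl : μ (⋃ k, F e k)ᶜ = 0 := by
    have hUm : MeasurableSet (⋃ k, F e k) :=
      MeasurableSet.iUnion fun k => (hcl e k).measurableSet
    rw [measure_compl hUm (by rw [hfull e]; exact ENNReal.one_ne_top), hfull e,
      mu_univ μ hμ, tsub_self]
  have hsup : μ S = ⨆ k, μ (S ∩ F e k) := by
    have hdir : Directed (fun x1 x2 => x1 ⊆ x2) (fun k => S ∩ F e k) :=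
      (Monotone.directed_le fun i j hij => Set.inter_subset_inter_right _ (hmono e hij))
    rw [← hdir.measure_iUnion, ← Set.inter_iUnion, measure_inter_conull hcompl]
  have hpos : (4⁻¹ : ENNReal) ^ n ≠ 0 := by
    apply pow_ne_zero; norm_num
  have hfin : (4⁻¹ : ENNReal) ^ n ≠ ⊤ := by
    apply ENNReal.pow_ne_top; norm_num
  have hhalf : (4⁻¹ : ENNReal) ^ n / 2 < ⨆ k, μ (S ∩ F e k) := by
    calc (4⁻¹ : ENNReal) ^ n / 2 < (4⁻¹ : ENNReal) ^ n := ENNReal.half_lt_self hpos hfin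
    _ ≤ μ S := hm
    _ = _ := hsup
  obtain ⟨k, hk⟩ := lt_iSup_iff.mp hhalf
  have hsplit : μ (S ∩ F e k) ≤
      μ (S ∩ F e k ∩ cyl (σ ++ [false])) + μ (S ∩ F e k ∩ cyl (σ ++ [true])) := by
    calc μ (S ∩ F e k)
        ≤ μ ((S ∩ F e k ∩ cyl (σ ++ [false])) ∪ (S ∩ F e k ∩ cyl (σ ++ [true]))) := by
          apply measure_mono
          intro X hX
          rcases cyl_subset_union σ (hX.1.2) with h | h
          · exact Or.inl ⟨hX, h⟩
          · exact Or.inr ⟨hX, h⟩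
      _ ≤ _ := measure_union_le _ _
  have key : (4⁻¹ : ENNReal) ^ (n + 1) ≤ μ (S ∩ F e k ∩ cyl (σ ++ [false])) ∨
      (4⁻¹ : ENNReal) ^ (n + 1) ≤ μ (S ∩ F e k ∩ cyl (σ ++ [true])) := by
    by_contra hcon
    push_neg at hcon
    have hsum : μ (S ∩ F e k ∩ cyl (σ ++ [false])) + μ (S ∩ F e k ∩ cyl (σ ++ [true]))
        < (4⁻¹ : ENNReal) ^ (n + 1) + (4⁻¹ : ENNReal) ^ (n + 1) :=
      ENNReal.add_lt_add hcon.1 hcon.2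
    have harith : (4⁻¹ : ENNReal) ^ (n + 1) + (4⁻¹ : ENNReal) ^ (n + 1)
        = (4⁻¹ : ENNReal) ^ n / 2 := by
      rw [pow_succ, ← mul_add]
      have h4 : (4⁻¹ : ENNReal) + 4⁻¹ = 2⁻¹ := by
        have : (4 : ENNReal)⁻¹ = 2⁻¹ * 2⁻¹ := by
          rw [← ENNReal.mul_inv (by norm_num) (by norm_num)]; norm_num
        rw [this, ← mul_add, ENNReal.inv_two_add_inv_two, mul_one]
      rw [h4, ENNReal.div_eq_inv_mul, mul_comm]
    rw [harith] at hsum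
    exact absurd (hk.trans_le (hsplit.trans hsum.le)) (lt_irrefl _)
  have hAnew : A F (cs ++ [k]) = A F cs ∩ F e k := A_append F cs k
  rcases key with h | h
  · refine ⟨k, false, h.trans (measure_mono ?_)⟩
    rw [hAnew]
    exact fun X hX => ⟨⟨hX.1.1.1, hX.1.2⟩, hX.2⟩
  · refine ⟨k, true, h.trans (measure_mono ?_)⟩
    rw [hAnew]
    exact fun X hX => ⟨⟨hX.1.1.1, hX.1.2⟩, hX.2⟩

/-- The invariant maintained through the recursion. -/
def Good (μ : Measure (ℕ → Bool)) (F : ℕ → ℕ → Set (ℕ → Bool)) (e : ℕ)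
    (p : List Bool × List ℕ) : Prop :=
  p.1.length = e ∧ p.2.length = e ∧ (4⁻¹ : ENNReal) ^ e ≤ μ (A F p.2 ∩ cyl p.1)

/-- The recursively constructed sequence of (string, index-list) pairs. -/
noncomputable def seq (μ : Measure (ℕ → Bool)) (hμ : IsFairCoin μ)
    (F : ℕ → ℕ → Set (ℕ → Bool)) (hcl : ∀ e k, IsClosed (F e k))
    (hmono : ∀ e, Monotone (F e)) (hfull : ∀ e, μ (⋃ k, F e k) = 1) :
    (e : ℕ) → {p : List Bool × List ℕ // Good μ F e p}
  | 0 => ⟨([], []), rfl, rfl, by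
      rw [A_nil, cyl_nil, Set.univ_inter, mu_univ μ hμ, pow_zero]⟩
  | e + 1 =>
    let p := seq μ hμ F hcl hmono hfull e
    let hb : (4⁻¹ : ENNReal) ^ p.1.1.length ≤ μ (A F p.1.2 ∩ cyl p.1.1) :=
      le_trans (le_of_eq (congrArg (fun m => (4⁻¹ : ENNReal) ^ m) p.2.1)) p.2.2.2
    let h := step μ hμ F hcl hmono hfull p.1.1 p.1.2 hb
    ⟨(p.1.1 ++ [h.choose_spec.choose], p.1.2 ++ [h.choose]), by
      refine ⟨by simp [p.2.1], by simp [p.2.2.1], ?_⟩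
      have hc := h.choose_spec.choose_spec
      exact le_trans (le_of_eq (congrArg (fun m => (4⁻¹ : ENNReal) ^ (m + 1)) p.2.1.symm)) hc⟩

end Stmt13Aux

open Stmt13Aux in
/-- Point selection in a conull intersection of `F_σ` sets. -/
theorem stmt_13 (μ : Measure (ℕ → Bool)) (hμ : IsFairCoin μ)
    (F : ℕ → ℕ → Set (ℕ → Bool))
    (hcl : ∀ e k, IsClosed (F e k))
    (hmono : ∀ e, Monotone (F e))
    (hfull : ∀ e, μ (⋃ k, F e k) = 1) :
    ∃ (x : ℕ → Bool) (c : ℕ → ℕ),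
      (∀ e, x ∈ F e (c e)) ∧
      ∀ e : ℕ,
        (1 / 2) ^ e * μ (cyl (List.ofFn fun i : Fin e => x i)) ≤
          μ ((⋂ d ∈ Finset.range e, F d (c d)) ∩ cyl (List.ofFn fun i : Fin e => x i)) := by
  classical
  set s := seq μ hμ F hcl hmono hfull with hs
  -- the string and index list at stage e
  set σ : ℕ → List Bool := fun e => (s e).1.1 with hσ
  set cs : ℕ → List ℕ := fun e => (s e).1.2 with hcs
  have hlen1 : ∀ e, (σ e).length = e := fun e => (s e).2.1
  have hlen2 : ∀ e, (cs e).length = e := fun e => (s e).2.2.1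
  have hbound : ∀ e, (4⁻¹ : ENNReal) ^ e ≤ μ (A F (cs e) ∩ cyl (σ e)) :=
    fun e => (s e).2.2.2
  have hsucc : ∀ e, ∃ k b, σ (e + 1) = σ e ++ [b] ∧ cs (e + 1) = cs e ++ [k] := by
    intro e
    refine ⟨_, _, rfl, rfl⟩
  -- definitions of x and c
  set x : ℕ → Bool := fun n => (σ (n + 1)).getD n false with hx
  set c : ℕ → ℕ := fun n => (cs (n + 1)).getD n 0 with hc
  -- stability of prefixes
  have hstab : ∀ e n, n < e → (σ e).getD n false = x n ∧ (cs e).getD n 0 = c n := by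
    intro e
    induction e with
    | zero => intro n hn; omega
    | succ e ih =>
      intro n hn
      rcases Nat.lt_or_ge n e with h | h
      · obtain ⟨k, b, h1, h2⟩ := hsucc e
        rw [h1, h2, List.getD_append _ _ _ _ (by rw [hlen1]; exact h),
          List.getD_append _ _ _ _ (by rw [hlen2]; exact h)]
        exact ih n h
      · have : n = e := by omega
        subst this
        exact ⟨rfl, rfl⟩
  -- the list of the first e bits of x is σ e
  have hofFn : ∀ e, (List.ofFn fun i : Fin e => x i) = σ e := by
    intro e
    apply List.ext_getElem (by simp [hlen1])
    intro n h1 h2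
    rw [List.getElem_ofFn]
    have := (hstab e n (by rwa [hlen1 e] at h2)).1
    rw [List.getD_eq_getElem _ _ h2] at this
    simp [this]
  -- A F (cs e) is the finite intersection
  have hA : ∀ e, A F (cs e) = ⋂ d ∈ Finset.range e, F d (c d) := by
    intro e
    rw [A, hlen2]
    apply Set.iInter₂_congr
    intro d hd
    rw [(hstab e d (Finset.mem_range.mp hd)).2]
  refine ⟨x, c, ?_, ?_⟩
  · -- membership via closedness
    intro e
    -- choose points in the positive-measure sets
    have hne : ∀ m, (A F (cs m) ∩ cyl (σ m)).Nonempty := by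
      intro m
      apply nonempty_of_measure_ne_zero (μ := μ)
      intro h0
      have := hbound m
      rw [h0] at this
      exact absurd (le_antisymm this (zero_le)) (pow_ne_zero m (by norm_num))
    choose y hy using hne
    have hyx : Filter.Tendsto y Filter.atTop (nhds x) := by
      rw [tendsto_pi_nhds]
      intro i
      apply Filter.Tendsto.congr' (f₁ := fun _ => x i) _ tendsto_const_nhds
      filter_upwards [Filter.eventually_ge_atTop (i + 1)] with m hm
      have hmem := (hy m).2
      have hlt : i < (σ m).length := by rw [hlen1]; omega
      have := hmem i hlt
      rw [List.get_eq_getElem] at this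
      rw [this, ← List.getD_eq_getElem _ false hlt, (hstab m i (by omega)).1]
    refine (hcl e (c e)).mem_of_tendsto hyx ?_
    filter_upwards [Filter.eventually_ge_atTop (e + 1)] with m hm
    have := (hy m).1
    rw [hA m] at this
    exact Set.mem_iInter₂.mp this e (Finset.mem_range.mpr (by omega))
  · -- the measure bound
    intro e
    rw [hofFn e]
    calc (1 / 2 : ENNReal) ^ e * μ (cyl (σ e)) = (4⁻¹ : ENNReal) ^ e := by
          rw [hμ (σ e), hlen1, ← mul_pow]
          congr 1
          rw [one_div, ← ENNReal.mul_inv (by norm_num) (by norm_num)]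
          norm_num
      _ ≤ μ (A F (cs e) ∩ cyl (σ e)) := hbound e
      _ = _ := by rw [hA e]
end

section
/- Countable-closure criterion for transfinite approximations: let γ be a countable ordinal and let (x_s)_{s ≤ γ} be a family of elements of 2^ℕ such that for every limit ordinal s ≤ γ, the set {n ∈ ℕ : lim_{t→s} x_t(n) does not exist} is finite (where lim_{t→s} x_t(n) exists means x_t(n) is eventually constant on a final segment of the ordinals below s). Then the topological closure of {x_s : s ≤ γ} in 2^ℕ is countable, and hence compact and Lebesgue-null. -/
open MeasureTheory

/-!
Every point of the closure is the limit of `x ∘ f` for some sequence `f` of ordinals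
`≤ γ`, which we may take monotone. If `f` attains its supremum `s`, the limit is `x s`. Otherwise
`s` is a limit ordinal cofinally approached by `f`, so the limit agrees with `lim_{t → s} x_t` at
every coordinate where that limit exists; by hypothesis only finitely many coordinates are left
free, so each limit ordinal contributes finitely many points. There are countably many ordinals
`≤ γ`, hence the closure is countable; a closed subset of `2^ℕ` is compact, and the fair-coin
measure has no atoms.
-/

open Filter Topology Set Order

lemma IsFairCoin.measure_singleton {μ : Measure (ℕ → Bool)} (hμ : IsFairCoin μ)
    (y : ℕ → Bool) : μ {y} = 0 := by
  have hle : ∀ k : ℕ, μ {y} ≤ (1 / 2 : ENNReal) ^ k := fun k =>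
    calc μ {y} ≤ μ (cyl (List.ofFn fun i : Fin k => y i)) :=
          measure_mono fun z hz i _ => by simp [mem_singleton_iff.mp hz]
      _ = (1 / 2 : ENNReal) ^ k := by rw [hμ, List.length_ofFn]
  exact le_antisymm (ge_of_tendsto'
    (ENNReal.tendsto_pow_atTop_nhds_zero_of_lt_one (by norm_num)) hle) zero_le

lemma IsFairCoin.nullSingletonClass {μ : Measure (ℕ → Bool)} (hμ : IsFairCoin μ) :
    NullSingletonClass μ :=
  ⟨hμ.measure_singleton⟩

lemma Ordinal.countable_Iic {γ : Ordinal} (hγ : γ.card ≤ Cardinal.aleph0) :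
    (Iic γ).Countable := by
  rw [← countable_coe_iff, ← Cardinal.mk_le_aleph0_iff, ← Order.Iio_succ, Cardinal.mk_Iio_ordinal,
    Cardinal.lift_le_aleph0, Order.succ_eq_add_one, Ordinal.card_add_one]
  exact Cardinal.add_le_aleph0.2 ⟨hγ, Cardinal.one_lt_aleph0.le⟩

section LimitPoints

variable {ι α : Type*} {x : Ordinal → ι → α} {s : Ordinal}

def IsLimitValueBelow (x : Ordinal → ι → α) (s : Ordinal) (n : ι) (i : α) : Prop :=
  ∃ t₀ < s, ∀ t, t₀ ≤ t → t < s → x t n = i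

/-- Contains the limit of every convergent `x ∘ f` with `f` cofinal in `s`. -/
def limitPoints (x : Ordinal → ι → α) (s : Ordinal) : Set (ι → α) :=
  {y | ∀ n i, IsLimitValueBelow x s n i → y n = i}

lemma limitPoints_finite [Finite α]
    (h : {n | ¬ ∃ i, IsLimitValueBelow x s n i}.Finite) : (limitPoints x s).Finite := by
  have := h.to_subtype
  refine Finite.of_finite_image (f := fun y (n : {n | ¬ ∃ i, IsLimitValueBelow x s n i}) => y n)
    (toFinite _) fun y₁ h₁ y₂ h₂ heq => funext fun n => ?_
  by_cases hn : ∃ i, IsLimitValueBelow x s n i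
  · obtain ⟨i, hi⟩ := hn
    rw [h₁ n i hi, h₂ n i hi]
  · exact congrFun heq ⟨n, hn⟩

lemma mem_limitPoints_of_tendsto [TopologicalSpace α] [T2Space α] {f : ℕ → Ordinal} {y : ι → α}
    (hlt : ∀ k, f k < s) (hcofinal : ∀ t < s, ∀ᶠ k in atTop, t ≤ f k)
    (hy : Tendsto (fun k => x (f k)) atTop (𝓝 y)) : y ∈ limitPoints x s := by
  rintro n i ⟨t₀, ht₀, hi⟩
  have hyn : Tendsto (fun k => x (f k) n) atTop (𝓝 (y n)) := tendsto_pi_nhds.mp hy n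
  refine tendsto_nhds_unique (hyn.congr' ?_) tendsto_const_nhds
  filter_upwards [hcofinal t₀ ht₀] with k hk
  exact hi _ hk (hlt k)

lemma eq_or_mem_limitPoints_of_monotone [TopologicalSpace α] [T2Space α] {f : ℕ → Ordinal}
    {y : ι → α} (hf : Monotone f) (hy : Tendsto (fun k => x (f k)) atTop (𝓝 y)) :
    y = x (⨆ k, f k) ∨ IsSuccLimit (⨆ k, f k) ∧ y ∈ limitPoints x (⨆ k, f k) := by
  have hbdd : BddAbove (range f) := Ordinal.bddAbove_of_small
  by_cases hattained : ∃ k, f k = ⨆ k, f k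
  · obtain ⟨k, hk⟩ := hattained
    left
    refine tendsto_nhds_unique hy (tendsto_const_nhds.congr' ?_)
    filter_upwards [eventually_ge_atTop k] with j hj
    rw [← hk, le_antisymm (hf hj) (hk ▸ le_ciSup hbdd j)]
  have hlim : IsSuccLimit (⨆ k, f k) := by
    by_contra h
    exact hattained (exists_eq_ciSup_of_not_isSuccLimit hbdd h)
  simp only [not_exists] at hattained
  refine Or.inr ⟨hlim, mem_limitPoints_of_tendsto
    (fun k => (le_ciSup hbdd k).lt_of_ne (hattained k)) (fun t ht => ?_) hy⟩
  obtain ⟨k, hk⟩ := (lt_ciSup_iff hbdd).mp ht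
  filter_upwards [eventually_ge_atTop k] with j hj
  exact hk.le.trans (hf hj)

lemma closure_image_Iic_subset [Countable ι] [TopologicalSpace α] [FirstCountableTopology α]
    [T2Space α] (γ : Ordinal) :
    closure (x '' Iic γ) ⊆ x '' Iic γ ∪ ⋃ s ∈ {s | s ≤ γ ∧ IsSuccLimit s}, limitPoints x s := by
  intro y hy
  obtain ⟨u, hu, hy⟩ := mem_closure_iff_seq_limit.mp hy
  choose f hfγ hfu using hu
  obtain ⟨g, hg⟩ := wellQuasiOrdered_le.exists_monotone_subseq f
  have hyg : Tendsto (fun k => x (f (g k))) atTop (𝓝 y) :=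
    (hy.comp g.strictMono.tendsto_atTop).congr fun k => (hfu _).symm
  have hsγ : ⨆ k, f (g k) ≤ γ := ciSup_le fun k => hfγ _
  rcases eq_or_mem_limitPoints_of_monotone (fun m n hmn => hg m n hmn) hyg with h | ⟨hlim, h⟩
  · exact Or.inl ⟨_, hsγ, h.symm⟩
  · exact Or.inr (mem_biUnion ⟨hsγ, hlim⟩ h)

lemma countable_closure_image_Iic [Countable ι] [Finite α] [TopologicalSpace α]
    [DiscreteTopology α] {γ : Ordinal} (hγ : γ.card ≤ Cardinal.aleph0)
    (hlim : ∀ s ≤ γ, IsSuccLimit s → {n | ¬ ∃ i, IsLimitValueBelow x s n i}.Finite) :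
    (closure (x '' Iic γ)).Countable := by
  have hIic := Ordinal.countable_Iic hγ
  refine Countable.mono (closure_image_Iic_subset γ) ((hIic.image x).union ?_)
  exact (hIic.mono fun s hs => hs.1).biUnion fun s hs =>
    (limitPoints_finite (hlim s hs.1 hs.2)).countable

end LimitPoints

/-- Countable-closure criterion for transfinite approximations: if along each limit
ordinal `s ≤ γ` the coordinatewise limit of `x_t` (`t → s`) fails to exist at only
finitely many coordinates, then the closure of `{x_s : s ≤ γ}` is countable,
compact, and null. -/
theorem stmt_14 (μ : Measure (ℕ → Bool)) (hμ : IsFairCoin μ)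
    (γ : Ordinal) (hγ : γ.card ≤ Cardinal.aleph0)
    (x : Ordinal → (ℕ → Bool))
    (hlim : ∀ s ≤ γ, Order.IsSuccLimit s →
      {n : ℕ | ¬ ∃ (i : Bool) (t₀ : Ordinal), t₀ < s ∧
        ∀ t, t₀ ≤ t → t < s → x t n = i}.Finite) :
    (closure (x '' Set.Iic γ)).Countable ∧
      IsCompact (closure (x '' Set.Iic γ)) ∧
      μ (closure (x '' Set.Iic γ)) = 0 := by
  have hcount := countable_closure_image_Iic hγ hlim
  have := hμ.nullSingletonClass
  exact ⟨hcount, isClosed_closure.isCompact, hcount.measure_zero μ⟩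
end

section
/- Permitted-extension lemma: let s be an ordinal and (y_t)_{t<s} a family of elements of 2^ℕ. For a finite binary string σ and an ordinal r ≤ s, say σ is forbidden at r if the set F_σ ∩ r = {t < r : σ is an initial segment of y_t} is not a closed subset of the ordinal r (i.e., there is a limit ordinal u < r such that F_σ ∩ u is cofinal in u but u ∉ F_σ); otherwise σ is permitted at r. Assume that for every t < s, every initial segment of y_t is permitted at t. Then: (i) the empty string is permitted at s; and (ii) every string σ permitted at s has at least one immediate extension σ⌢i (i ∈ {0,1}) permitted at s. -/
/-- `σ` is an initial segment of the infinite binary sequence `X`. -/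
def IsPrefixOf (σ : List Bool) (X : ℕ → Bool) : Prop :=
  ∀ i, (h : i < σ.length) → X i = σ.get ⟨i, h⟩

/-- `σ` is forbidden at the ordinal `r` (with respect to the family `y`): the set
`F_σ ∩ r = {t < r : σ ⪯ y_t}` is not closed in `r`, i.e. there is a limit ordinal
`u < r` such that `F_σ ∩ u` is cofinal in `u` but `u ∉ F_σ`. -/
def Forbidden (y : Ordinal → (ℕ → Bool)) (σ : List Bool) (r : Ordinal) : Prop :=
  ∃ u, u < r ∧ Order.IsSuccLimit u ∧
    (∀ v < u, ∃ t, v ≤ t ∧ t < u ∧ IsPrefixOf σ (y t)) ∧ ¬ IsPrefixOf σ (y u)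

/-
Suppose both `σ ++ [false]` and `σ ++ [true]` are forbidden at `s`, via limits `u₀` and `u₁`.
Since `σ` is permitted at `s`, `σ` is still an initial segment of `y u_b`, so the bit of
`y u_b` after `σ` must be `!b`. If `u₀ < u₁`, then `σ ++ [false]` is an initial segment of
`y u₁` that is forbidden at `u₁` (via `u₀`), against the hypothesis; symmetrically if
`u₁ < u₀`; and `u₀ = u₁` would make the bit after `σ` both `true` and `false`.
-/

theorem isPrefixOf_nil (X : ℕ → Bool) : IsPrefixOf [] X :=
  fun _ h => absurd h (Nat.not_lt_zero _)

theorem IsPrefixOf.of_isPrefix {σ τ : List Bool} {X : ℕ → Bool} (hσ : IsPrefixOf σ X)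
    (hτ : τ <+: σ) : IsPrefixOf τ X := by
  intro i hi
  rw [hσ i (hi.trans_le hτ.length_le)]
  simp [hτ.getElem hi]

theorem IsPrefixOf.concat_self {σ : List Bool} {X : ℕ → Bool} (h : IsPrefixOf σ X) :
    IsPrefixOf (σ ++ [X σ.length]) X := by
  intro i hi
  rw [List.length_append, List.length_singleton] at hi
  rcases (Nat.lt_succ_iff.1 hi).lt_or_eq with hlt | rfl
  · simp [h i hlt, List.getElem_append_left hlt]
  · simp

theorem IsPrefixOf.concat_or_concat_not {σ : List Bool} {X : ℕ → Bool} (h : IsPrefixOf σ X)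
    (b : Bool) : IsPrefixOf (σ ++ [b]) X ∨ IsPrefixOf (σ ++ [!b]) X := by
  cases hX : X σ.length == b with
  | true => exact .inl (by simpa [beq_iff_eq.1 hX] using h.concat_self)
  | false => exact .inr (by simpa [Bool.eq_not_of_ne (ne_of_beq_false hX)] using h.concat_self)

section Forbidden

variable {y : Ordinal → (ℕ → Bool)} {σ : List Bool}

def IsForbiddingLimit (y : Ordinal → (ℕ → Bool)) (σ : List Bool) (u : Ordinal) : Prop :=
  Order.IsSuccLimit u ∧
    (∀ v < u, ∃ t, v ≤ t ∧ t < u ∧ IsPrefixOf σ (y t)) ∧ ¬ IsPrefixOf σ (y u)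

theorem forbidden_iff {r : Ordinal} :
    Forbidden y σ r ↔ ∃ u < r, IsForbiddingLimit y σ u :=
  Iff.rfl

theorem not_forbidden_nil (r : Ordinal) : ¬ Forbidden y [] r :=
  fun ⟨_, _, _, _, hu⟩ => hu (isPrefixOf_nil _)

theorem IsForbiddingLimit.isPrefixOf_concat_not {s u : Ordinal} {b : Bool}
    (hu : IsForbiddingLimit y (σ ++ [b]) u) (hus : u < s) (hσ : ¬ Forbidden y σ s) :
    IsPrefixOf (σ ++ [!b]) (y u) := by
  obtain ⟨hlim, hcof, hnot⟩ := hu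
  have hprefix : σ <+: σ ++ [b] := List.prefix_append σ [b]
  by_contra hnot'
  refine hσ ⟨u, hus, hlim, fun v hv => ?_, fun hpre => ?_⟩
  · obtain ⟨t, hvt, htu, ht⟩ := hcof v hv
    exact ⟨t, hvt, htu, ht.of_isPrefix hprefix⟩
  · exact (hpre.concat_or_concat_not b).elim hnot hnot'

end Forbidden

/-- Permitted-extension lemma: if every initial segment of every `y_t` (`t < s`) is
permitted at `t`, then the empty string is permitted at `s`, and every string
permitted at `s` has a permitted immediate extension. -/
theorem stmt_15 (s : Ordinal) (y : Ordinal → (ℕ → Bool))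
    (hperm : ∀ t < s, ∀ σ : List Bool, IsPrefixOf σ (y t) → ¬ Forbidden y σ t) :
    ¬ Forbidden y [] s ∧
      ∀ σ : List Bool, ¬ Forbidden y σ s → ∃ i : Bool, ¬ Forbidden y (σ ++ [i]) s := by
  refine ⟨not_forbidden_nil s, fun σ hσ => ?_⟩
  by_contra! hboth
  obtain ⟨u₀, hu₀s, hu₀⟩ := forbidden_iff.1 (hboth false)
  obtain ⟨u₁, hu₁s, hu₁⟩ := forbidden_iff.1 (hboth true)
  have hy₀ : IsPrefixOf (σ ++ [true]) (y u₀) := hu₀.isPrefixOf_concat_not hu₀s hσ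
  have hy₁ : IsPrefixOf (σ ++ [false]) (y u₁) := hu₁.isPrefixOf_concat_not hu₁s hσ
  rcases lt_trichotomy u₀ u₁ with hlt | rfl | hlt
  · exact hperm u₁ hu₁s _ hy₁ (forbidden_iff.2 ⟨u₀, hlt, hu₀⟩)
  · exact hu₀.2.2 hy₁
  · exact hperm u₀ hu₀s _ hy₀ (forbidden_iff.2 ⟨u₁, hlt, hu₁⟩)
end
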